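/- At δ* with issuance F = φ(δ*), the vault's payoff simplifies to V(φ(δ*), δ*) = N·e^{σ²/2} + N·Φ(-d₁(δ*))·(e^b - 1), where d₁(δ*) = -Φ⁻¹((e^{b-δ*}-1)/(e^b-1)) + σ; consequently, the vault's participation constraint u ≤ V holds if and only if u ≤ N·e^{σ²/2} + N·Φ(-d₁(δ*))·(e^b - 1). -/
import Mathlib


open Real Set

/-- Standard normal density. -/
noncomputable def stdPdf (x : ℝ) : ℝ := (Real.sqrt (2 * Real.pi))⁻¹ * Real.exp (-x ^ 2 / 2)

/-- Standard normal CDF. -/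
noncomputable def stdCdf (x : ℝ) : ℝ := ∫ t in Set.Iic x, stdPdf t

/-- Inverse of the standard normal CDF. -/
noncomputable def stdCdfInv : ℝ → ℝ := Function.invFun stdCdf

noncomputable def d1 (N F σ δ : ℝ) : ℝ := (Real.log (N / (F * Real.exp δ)) + σ ^ 2 / 2) / σ

noncomputable def d2 (N F σ δ : ℝ) : ℝ := d1 N F σ δ - σ

/-- Expected collateral shortfall P(F, δ). -/
noncomputable def Pshort (N σ F δ : ℝ) : ℝ :=
  F * Real.exp δ * stdCdf (-(d2 N F σ δ)) - N * stdCdf (-(d1 N F σ δ))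

/-- Vault payoff V(F, δ). -/
noncomputable def Vval (N σ b F δ : ℝ) : ℝ :=
  N * Real.exp (σ ^ 2 / 2) + F * (Real.exp b - Real.exp δ)
    - Pshort N σ F δ * (Real.exp b - 1)

/-- Unconstrained optimal issuance φ(δ). -/
noncomputable def phiIss (N σ b δ : ℝ) : ℝ :=
  N * Real.exp (σ * stdCdfInv ((Real.exp (b - δ) - 1) / (Real.exp b - 1)) - δ - σ ^ 2 / 2)


section Aux
open MeasureTheory Filter
lemma stdPdf_eq (x : ℝ) : stdPdf x = (Real.sqrt (2 * Real.pi))⁻¹ * Real.exp (-(1/2 : ℝ) * x ^ 2) := by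
  unfold stdPdf; ring_nf

lemma integrable_stdPdf : Integrable stdPdf := by
  have h : Integrable (fun x : ℝ => Real.exp (-(1/2 : ℝ) * x ^ 2)) :=
    integrable_exp_neg_mul_sq (by norm_num)
  have he : stdPdf = fun x => (Real.sqrt (2 * Real.pi))⁻¹ * Real.exp (-(1/2 : ℝ) * x ^ 2) :=
    funext stdPdf_eq
  rw [he]; exact h.const_mul _

lemma integral_stdPdf : ∫ x, stdPdf x = 1 := by
  have h : ∫ x : ℝ, Real.exp (-(1/2 : ℝ) * x ^ 2) = Real.sqrt (Real.pi / (1/2)) :=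
    integral_gaussian (1/2)
  have h2 : Real.sqrt (2 * Real.pi) ≠ 0 := by positivity
  rw [show (fun x => stdPdf x) = fun x => (Real.sqrt (2 * Real.pi))⁻¹ * Real.exp (-(1/2 : ℝ) * x ^ 2) from funext stdPdf_eq, integral_const_mul, h]
  rw [show Real.pi / (1/2) = 2 * Real.pi by ring]
  field_simp

lemma continuous_stdCdf : Continuous stdCdf := by
  have h := integrable_stdPdf.continuous_primitive 0
  have : ∀ x, stdCdf x = stdCdf 0 + ∫ t in (0:ℝ)..x, stdPdf t := by
    intro x
    have := intervalIntegral.integral_Iic_sub_Iic (integrable_stdPdf.integrableOn) (integrable_stdPdf.integrableOn) (a := 0) (b := x)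
    unfold stdCdf; linarith [this]
  rw [show stdCdf = fun x => stdCdf 0 + ∫ t in (0:ℝ)..x, stdPdf t from funext this]
  exact continuous_const.add h

lemma tendsto_stdCdf_atTop : Tendsto stdCdf atTop (nhds 1) := by
  have h := tendsto_setIntegral_of_monotone (μ := volume) (f := stdPdf)
    (s := fun x : ℝ => Iic x) (fun i => measurableSet_Iic) (fun a b hab => Iic_subset_Iic.2 hab)
    (by rw [iUnion_Iic]; exact integrable_stdPdf.integrableOn)
  rw [iUnion_Iic, Measure.restrict_univ] at h
  rw [integral_stdPdf] at h
  exact h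

lemma tendsto_stdCdf_atBot : Tendsto stdCdf atBot (nhds 0) := by
  have h := tendsto_setIntegral_of_antitone (μ := volume) (f := stdPdf)
    (s := fun x : ℝ => Iic (-x)) (fun i => measurableSet_Iic)
    (fun a b hab => Iic_subset_Iic.2 (by linarith))
    ⟨0, integrable_stdPdf.integrableOn⟩
  have hempty : (⋂ x : ℝ, Iic (-x)) = (∅ : Set ℝ) := by
    ext y; simp only [mem_iInter, mem_Iic, mem_empty_iff_false, iff_false, not_forall]
    exact ⟨-(y - 1), by norm_num⟩
  rw [hempty] at h
  simp only [Measure.restrict_empty, integral_zero_measure] at h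
  have : Tendsto (fun x : ℝ => -x) atBot atTop := tendsto_neg_atBot_atTop
  have h2 := h.comp this
  have h3 : ((fun i => ∫ x in Iic (-i), stdPdf x) ∘ fun x : ℝ => -x) = stdCdf := by
    funext x; simp [stdCdf]
  rwa [h3] at h2

lemma stdCdf_surj {q : ℝ} (hq : q ∈ Set.Ioo (0:ℝ) 1) : ∃ x, stdCdf x = q := by
  obtain ⟨a, ha⟩ := (tendsto_stdCdf_atBot.eventually (eventually_lt_nhds hq.1)).exists
  obtain ⟨b, hb⟩ := (tendsto_stdCdf_atTop.eventually (eventually_gt_nhds hq.2)).exists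
  have hq' : q ∈ Set.uIcc (stdCdf a) (stdCdf b) := by
    rw [Set.mem_uIcc]; left; exact ⟨ha.le, hb.le⟩
  obtain ⟨x, _, hx⟩ := intermediate_value_uIcc continuous_stdCdf.continuousOn hq'
  exact ⟨x, hx⟩

lemma stdCdf_stdCdfInv {q : ℝ} (hq : q ∈ Set.Ioo (0:ℝ) 1) : stdCdf (stdCdfInv q) = q :=
  Function.invFun_eq (stdCdf_surj hq)

end Aux

theorem stmt19 (N σ b u δs : ℝ) (hN : 0 < N) (hσ : 0 < σ) (hb : 0 < b) (hu : 0 ≤ u)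
    (hδs : δs ∈ Set.Ioo (0 : ℝ) b)
    (hcrit : σ * (Real.exp b - Real.exp (b - δs)) /
        ((Real.exp b - 1) *
          stdPdf (stdCdfInv ((Real.exp (b - δs) - 1) / (Real.exp b - 1)))) = 1) :
    Vval N σ b (phiIss N σ b δs) δs
        = N * Real.exp (σ ^ 2 / 2) +
          N * stdCdf (-(-stdCdfInv ((Real.exp (b - δs) - 1) / (Real.exp b - 1)) + σ)) *
            (Real.exp b - 1) ∧
    (u ≤ Vval N σ b (phiIss N σ b δs) δs ↔
      u ≤ N * Real.exp (σ ^ 2 / 2) +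
          N * stdCdf (-(-stdCdfInv ((Real.exp (b - δs) - 1) / (Real.exp b - 1)) + σ)) *
            (Real.exp b - 1)) := by
  obtain ⟨hδ0, hδb⟩ := hδs
  set q := (Real.exp (b - δs) - 1) / (Real.exp b - 1) with hqdef
  have hEb : (1:ℝ) < Real.exp b := by
    rw [← Real.exp_zero]; exact Real.exp_lt_exp.2 hb
  have hden : (0:ℝ) < Real.exp b - 1 := by linarith
  have hnum : (0:ℝ) < Real.exp (b - δs) - 1 := by
    have : (1:ℝ) < Real.exp (b - δs) := by
      rw [← Real.exp_zero]; exact Real.exp_lt_exp.2 (by linarith)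
    linarith
  have hlt : Real.exp (b - δs) < Real.exp b := Real.exp_lt_exp.2 (by linarith)
  have hq : q ∈ Set.Ioo (0:ℝ) 1 := ⟨div_pos hnum hden, (div_lt_one hden).2 (by linarith)⟩
  set c := stdCdfInv q with hcdef
  have hqc : stdCdf c = q := stdCdf_stdCdfInv hq
  set F := phiIss N σ b δs with hFdef
  have hFval : F = N * Real.exp (σ * c - δs - σ ^ 2 / 2) := rfl
  have hFD : F * Real.exp δs = N * Real.exp (σ * c - σ ^ 2 / 2) := by
    rw [hFval, mul_assoc, ← Real.exp_add]; ring_nf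
  have hFpos : 0 < F := by rw [hFval]; positivity
  have hlog : Real.log (N / (F * Real.exp δs)) = σ ^ 2 / 2 - σ * c := by
    rw [hFD]
    have h1 : N / (N * Real.exp (σ * c - σ ^ 2 / 2)) = Real.exp (σ ^ 2 / 2 - σ * c) := by
      rw [div_eq_iff (by positivity : (N * Real.exp (σ * c - σ ^ 2 / 2)) ≠ 0),
        mul_comm, mul_assoc, ← Real.exp_add,
        show σ * c - σ ^ 2 / 2 + (σ ^ 2 / 2 - σ * c) = 0 by ring, Real.exp_zero, mul_one]
    rw [h1, Real.log_exp]
  have hd1 : d1 N F σ δs = -c + σ := by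
    unfold d1; rw [hlog]; field_simp; ring
  have hd2 : -(d2 N F σ δs) = c := by unfold d2; rw [hd1]; ring
  have hDE : Real.exp δs * (Real.exp (b - δs) - 1) = Real.exp b - Real.exp δs := by
    rw [mul_sub, ← Real.exp_add]; ring_nf
  have hED : F * (Real.exp b - Real.exp δs) = F * Real.exp δs * q * (Real.exp b - 1) := by
    rw [hqdef]
    field_simp
    rw [← hDE]
  have hmain : Vval N σ b F δs
      = N * Real.exp (σ ^ 2 / 2) + N * stdCdf (-(-c + σ)) * (Real.exp b - 1) := by
    unfold Vval Pshort
    rw [hd2, hd1, hqc]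
    linear_combination hED
  exact ⟨hmain, by rw [hmain]⟩
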